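/- If D ⊆ Z_{2^k}^n is a linear code of cardinality n·2^k whose nonzero codewords all have wt*-weight in {n·2^{k-2}, n·2^{k-1}} and with minimum wt*-weight n·2^{k-2} (i.e., an (n, n·2^k, n·2^{k-2})* code), then D contains a codeword all of whose coordinates are units of Z_{2^k} (i.e., all coordinates odd). -/

import Mathlib

/-- `wt*` on `Z_{2^k}`. -/
def wtStarK (k : ℕ) (x : ZMod (2 ^ k)) : ℕ :=
  if x = 0 then 0 else if x = (2 ^ (k - 1) : ZMod (2 ^ k)) then 2 ^ (k - 1) else 2 ^ (k - 2)

/-- The `wt*`-weight of a word in `Z_{2^k}^n`. -/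
def wtStarW (k n : ℕ) (x : Fin n → ZMod (2 ^ k)) : ℕ :=
  ∑ i, wtStarK k (x i)

/-!
Write `h = 2^(k-1)`. Multiplication by `h` sends a unit of `Z_{2^k}` to `h` and a non-unit
to `0`, so `h • x ∈ D` has `wt*`-weight `2^(k-1)` times the number of unit coordinates of `x`;
the weight condition then allows a codeword with a non-unit coordinate at most `n/2` unit
coordinates. Every coordinate takes a unit value on `D`: otherwise the projection to that
coordinate misses the units, so the subcode vanishing there has more than `n` words, whereas a
Plotkin-type averaging (each coordinate contributes on average at most `2^(k-2)` to `wt*`, the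
vanishing one nothing) bounds it by `n`. Translating by a codeword that is a unit at coordinate
`j` swaps units and non-units there, so exactly half of `D` is a unit at `j`, and the average
number of unit coordinates over `D` is `n/2`. As the zero word has none, some codeword has more
than `n/2`, hence only units.
-/

open Finset

variable {k n : ℕ}

theorem two_pow_sub_one_eq_two_mul (hk : 2 ≤ k) : 2 ^ (k - 1) = 2 * 2 ^ (k - 2) := by
  rw [← pow_succ']
  congr 1
  omega

namespace ZMod

theorem two_pow_pred_ne_zero (hk : 1 ≤ k) : (2 ^ (k - 1) : ZMod (2 ^ k)) ≠ 0 := by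
  have : ((2 ^ (k - 1) : ℕ) : ZMod (2 ^ k)) ≠ 0 := by
    rw [Ne, ZMod.natCast_eq_zero_iff]
    exact Nat.not_dvd_of_pos_of_lt (by positivity) (Nat.pow_lt_pow_right one_lt_two (by omega))
  exact_mod_cast this

theorem two_pow_pred_add_self (hk : 1 ≤ k) : (2 ^ (k - 1) + 2 ^ (k - 1) : ZMod (2 ^ k)) = 0 := by
  rw [← two_mul, ← pow_succ', Nat.sub_add_cancel hk]
  exact_mod_cast ZMod.natCast_self (2 ^ k)

theorem two_pow_pred_mul (hk : 1 ≤ k) (a : ZMod (2 ^ k)) :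
    2 ^ (k - 1) * a = if IsUnit a then 2 ^ (k - 1) else 0 := by
  have hunit : IsUnit a ↔ ¬2 ∣ a.val := by
    conv_lhs => rw [← natCast_zmod_val a]
    exact isUnit_natCast_iff_not_dvd_pow Nat.prime_two (by omega)
  conv_lhs => rw [← natCast_zmod_val a]
  obtain ⟨m, hm | hm⟩ := Nat.even_or_odd' a.val
  · rw [if_neg (by rw [hunit, hm, not_not]; exact dvd_mul_right 2 m), hm]
    calc (2 ^ (k - 1) * ((2 * m : ℕ) : ZMod (2 ^ k)))
        = (2 ^ (k - 1) + 2 ^ (k - 1)) * m := by push_cast; ring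
      _ = 0 := by rw [two_pow_pred_add_self hk, zero_mul]
  · rw [if_pos (by rw [hunit, hm]; omega), hm]
    calc (2 ^ (k - 1) * ((2 * m + 1 : ℕ) : ZMod (2 ^ k)))
        = (2 ^ (k - 1) + 2 ^ (k - 1)) * m + 2 ^ (k - 1) := by push_cast; ring
      _ = 2 ^ (k - 1) := by rw [two_pow_pred_add_self hk, zero_mul, zero_add]

theorem isUnit_iff_two_pow_pred_mul_ne_zero (hk : 1 ≤ k) {a : ZMod (2 ^ k)} :
    IsUnit a ↔ 2 ^ (k - 1) * a ≠ 0 := by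
  rw [two_pow_pred_mul hk]
  split_ifs with ha <;> simp [ha, two_pow_pred_ne_zero hk]

theorem isUnit_add_iff (hk : 1 ≤ k) {a u : ZMod (2 ^ k)} (hu : IsUnit u) :
    IsUnit (a + u) ↔ ¬IsUnit a := by
  rw [isUnit_iff_two_pow_pred_mul_ne_zero hk, mul_add, two_pow_pred_mul hk u, if_pos hu,
    two_pow_pred_mul hk a]
  split_ifs with ha <;> simp [ha, two_pow_pred_add_self hk, two_pow_pred_ne_zero hk]

end ZMod

theorem wtStarK_zero : wtStarK k 0 = 0 := if_pos rfl

theorem wtStarK_two_pow_pred (hk : 1 ≤ k) : wtStarK k (2 ^ (k - 1)) = 2 ^ (k - 1) := by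
  rw [wtStarK, if_neg (ZMod.two_pow_pred_ne_zero hk), if_pos rfl]

theorem wtStarK_le_of_ne {a : ZMod (2 ^ k)} (ha : a ≠ 2 ^ (k - 1)) :
    wtStarK k a ≤ 2 ^ (k - 2) := by
  unfold wtStarK
  split_ifs <;> simp_all

theorem wtStarK_add_wtStarK_add_two_pow_pred (hk : 2 ≤ k) (a : ZMod (2 ^ k)) :
    wtStarK k a + wtStarK k (a + 2 ^ (k - 1)) = 2 ^ (k - 1) := by
  have hh := ZMod.two_pow_pred_add_self (k := k) (by omega)
  by_cases ha0 : a = 0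
  · simp [ha0, wtStarK_zero, wtStarK_two_pow_pred (k := k) (by omega)]
  by_cases hah : a = 2 ^ (k - 1)
  · simp [hah, hh, wtStarK_zero, wtStarK_two_pow_pred (k := k) (by omega)]
  have h1 : a + 2 ^ (k - 1) ≠ 0 := fun h => hah (by linear_combination h - hh)
  have h2 : a + 2 ^ (k - 1) ≠ 2 ^ (k - 1) := fun h => ha0 (by linear_combination h)
  rw [wtStarK, wtStarK, if_neg ha0, if_neg hah, if_neg h1, if_neg h2,
    two_pow_sub_one_eq_two_mul hk, two_mul]

variable {G : Type*} [AddCommGroup G]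

theorem sum_wtStarK_le [Fintype G] (hk : 2 ≤ k) (f : G →+ ZMod (2 ^ k)) :
    ∑ g, wtStarK k (f g) ≤ 2 ^ (k - 2) * Fintype.card G := by
  by_cases h : ∃ g₀, f g₀ = 2 ^ (k - 1)
  · obtain ⟨g₀, hg₀⟩ := h
    have hshift : ∑ g, wtStarK k (f (g + g₀)) = ∑ g, wtStarK k (f g) :=
      Fintype.sum_equiv (Equiv.addRight g₀) _ _ fun _ => rfl
    have : 2 * ∑ g, wtStarK k (f g) = 2 * (2 ^ (k - 2) * Fintype.card G) :=
      calc 2 * ∑ g, wtStarK k (f g) = ∑ g, (wtStarK k (f g) + wtStarK k (f (g + g₀))) := by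
            rw [sum_add_distrib, hshift, two_mul]
        _ = ∑ _g : G, 2 ^ (k - 1) := by
            simp only [map_add, hg₀, wtStarK_add_wtStarK_add_two_pow_pred hk]
        _ = 2 * (2 ^ (k - 2) * Fintype.card G) := by
            rw [sum_const, card_univ, smul_eq_mul, two_pow_sub_one_eq_two_mul hk]; ring
    omega
  · push Not at h
    calc ∑ g, wtStarK k (f g) ≤ ∑ _g : G, 2 ^ (k - 2) :=
          sum_le_sum fun g _ => wtStarK_le_of_ne (h g)
      _ = 2 ^ (k - 2) * Fintype.card G := by rw [sum_const, card_univ, smul_eq_mul, mul_comm]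

theorem sum_wtStarW_le [Fintype G] (hk : 2 ≤ k) (f : G →+ (Fin n → ZMod (2 ^ k))) (i : Fin n)
    (hi : ∀ g, f g i = 0) :
    ∑ g, wtStarW k n (f g) ≤ (n - 1) * (2 ^ (k - 2) * Fintype.card G) := by
  simp only [wtStarW]
  rw [sum_comm, ← add_sum_erase _ _ (mem_univ i)]
  simp only [hi, wtStarK_zero, sum_const_zero, zero_add]
  calc ∑ j ∈ univ.erase i, ∑ g, wtStarK k (f g j)
      ≤ ∑ _j ∈ univ.erase i, 2 ^ (k - 2) * Fintype.card G :=
        sum_le_sum fun j _ => sum_wtStarK_le hk ((Pi.evalAddMonoidHom _ j).comp f)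
    _ = (n - 1) * (2 ^ (k - 2) * Fintype.card G) := by
        rw [sum_const, card_erase_of_mem (mem_univ i), card_univ, Fintype.card_fin, smul_eq_mul]

theorem card_le_of_forall_apply_eq_zero [Finite G] (hk : 2 ≤ k)
    (f : G →+ (Fin n → ZMod (2 ^ k)))
    (hwt : ∀ g ≠ 0, n * 2 ^ (k - 2) ≤ wtStarW k n (f g)) (i : Fin n) (hi : ∀ g, f g i = 0) :
    Nat.card G ≤ n := by
  have := Fintype.ofFinite G
  classical
  have hlow : (Fintype.card G - 1) * (n * 2 ^ (k - 2)) ≤ ∑ g, wtStarW k n (f g) :=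
    calc (Fintype.card G - 1) * (n * 2 ^ (k - 2)) = ∑ _g ∈ univ.erase 0, n * 2 ^ (k - 2) := by
          rw [sum_const, card_erase_of_mem (mem_univ 0), card_univ, smul_eq_mul]
      _ ≤ ∑ g ∈ univ.erase 0, wtStarW k n (f g) :=
          sum_le_sum fun g hg => hwt g (ne_of_mem_erase hg)
      _ ≤ ∑ g, wtStarW k n (f g) := sum_le_sum_of_subset (erase_subset _ _)
  have hup := sum_wtStarW_le hk f i hi
  rw [Nat.card_eq_fintype_card]
  have key : (Fintype.card G - 1) * n ≤ (n - 1) * Fintype.card G :=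
    Nat.le_of_mul_le_mul_right (by linarith [hlow.trans hup]) (by positivity : 0 < 2 ^ (k - 2))
  have hG := Fintype.card_pos (α := G)
  have hn := i.pos
  zify [hG, hn] at key ⊢
  nlinarith

theorem card_filter_isUnit_mul_two [Fintype G] (hk : 1 ≤ k) (f : G →+ ZMod (2 ^ k)) {g₀ : G}
    (hg₀ : IsUnit (f g₀)) : #{g | IsUnit (f g)} * 2 = Fintype.card G := by
  have hswap : #{g | IsUnit (f g)} = #{g | ¬IsUnit (f g)} :=
    card_equiv (Equiv.addRight g₀) fun g => by
      simp [map_add, ZMod.isUnit_add_iff hk hg₀]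
  rw [mul_two]
  nth_rw 2 [hswap]
  exact card_filter_add_card_filter_not _

theorem sum_card_filter_isUnit_mul_two [Fintype G] (hk : 1 ≤ k)
    (f : G →+ (Fin n → ZMod (2 ^ k)))
    (hf : ∀ j, ∃ g, IsUnit (f g j)) :
    ∑ g, #{j | IsUnit (f g j)} * 2 = n * Fintype.card G := by
  have hcomm : ∑ g, #{j | IsUnit (f g j)} = ∑ j, #{g | IsUnit (f g j)} := by
    simp only [card_filter]
    exact sum_comm
  rw [← sum_mul, hcomm, sum_mul]
  calc ∑ j, #{g | IsUnit (f g j)} * 2 = ∑ _j : Fin n, Fintype.card G :=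
        sum_congr rfl fun j _ =>
          card_filter_isUnit_mul_two hk ((Pi.evalAddMonoidHom _ j).comp f) (hf j).choose_spec
    _ = n * Fintype.card G := by rw [sum_const, card_univ, Fintype.card_fin, smul_eq_mul]

theorem exists_mem_isUnit_apply (hk : 2 ≤ k)
    (D : Submodule (ZMod (2 ^ k)) (Fin n → ZMod (2 ^ k)))
    (hcard : n * 2 ^ k ≤ Nat.card D)
    (hwt : ∀ x ∈ D, x ≠ 0 → n * 2 ^ (k - 2) ≤ wtStarW k n x) (i : Fin n) :
    ∃ x ∈ D, IsUnit (x i) := by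
  by_contra! hnu
  let φ : D →+ ZMod (2 ^ k) := (Pi.evalAddMonoidHom _ i).comp D.subtype.toAddMonoidHom
  have hker : Nat.card φ.ker ≤ n :=
    card_le_of_forall_apply_eq_zero hk (D.subtype.toAddMonoidHom.comp φ.ker.subtype)
      (fun g hg => hwt _ g.1.2 (by simpa using hg)) i fun g => g.2
  have hrange : Nat.card φ.range < 2 ^ k := by
    have hone : (1 : ZMod (2 ^ k)) ∉ φ.range := by
      rintro ⟨x, hx⟩
      exact hnu x x.2 (by rw [show (x : Fin n → ZMod (2 ^ k)) i = 1 from hx]; exact isUnit_one)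
    refine lt_of_le_of_ne (by simpa using φ.range.card_le_card_addGroup) fun h => hone ?_
    rw [(AddSubgroup.card_eq_iff_eq_top _).1 (h.trans (Nat.card_zmod _).symm)]
    exact AddSubgroup.mem_top 1
  have hD := φ.ker.card_mul_index
  rw [AddSubgroup.index_ker] at hD
  have hn := i.pos
  nlinarith

theorem wtStarW_two_pow_pred_smul (hk : 1 ≤ k) (x : Fin n → ZMod (2 ^ k)) :
    wtStarW k n ((2 ^ (k - 1) : ZMod (2 ^ k)) • x) = #{j | IsUnit (x j)} * 2 ^ (k - 1) := by
  simp only [wtStarW, Pi.smul_apply, smul_eq_mul, ZMod.two_pow_pred_mul hk,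
    apply_ite (wtStarK k), wtStarK_two_pow_pred hk, wtStarK_zero, sum_ite, sum_const_zero,
    add_zero, sum_const, smul_eq_mul]

theorem card_filter_isUnit_mul_two_le (hk : 2 ≤ k)
    (D : Submodule (ZMod (2 ^ k)) (Fin n → ZMod (2 ^ k)))
    (hwts : ∀ x ∈ D, x ≠ 0 →
      wtStarW k n x = n * 2 ^ (k - 2) ∨ wtStarW k n x = n * 2 ^ (k - 1))
    {x : Fin n → ZMod (2 ^ k)} (hx : x ∈ D) (hnu : ∃ j, ¬IsUnit (x j)) :
    #{j | IsUnit (x j)} * 2 ≤ n := by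
  obtain ⟨j, hj⟩ := hnu
  have hlt : #{j | IsUnit (x j)} < n := by
    simpa using card_lt_univ_of_notMem (s := {j | IsUnit (x j)}) (x := j) (by simpa using hj)
  have hwt := wtStarW_two_pow_pred_smul (by omega) x
  rcases Nat.eq_zero_or_pos #{j | IsUnit (x j)} with h0 | hpos
  · omega
  have hne : (2 ^ (k - 1) : ZMod (2 ^ k)) • x ≠ 0 := fun h => by
    have hzero : wtStarW k n 0 = 0 := by simp [wtStarW, wtStarK_zero]
    rw [h, hzero] at hwt
    exact absurd hwt.symm (by positivity)
  rcases hwts _ (D.smul_mem _ hx) hne with h | h <;> rw [hwt] at h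
  · exact (Nat.eq_of_mul_eq_mul_right (by positivity : 0 < 2 ^ (k - 2))
      (by rw [← h, two_pow_sub_one_eq_two_mul hk]; ring)).le
  · exact absurd (Nat.eq_of_mul_eq_mul_right (by positivity) h) hlt.ne

/-- If `D ⊆ Z_{2^k}^n` (`n = 2^r` a power of 2) is a linear code of cardinality
`n·2^k` all of whose nonzero codewords have `wt*`-weight `n·2^{k-2}` or `n·2^{k-1}`
(an `(n, n·2^k, n·2^{k-2})*` code), then `D` contains a codeword all of whose
coordinates are units of `Z_{2^k}`, i.e. odd. -/
theorem stmt_18 (k r : ℕ) (hk : 2 ≤ k)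
    (D : Submodule (ZMod (2 ^ k)) (Fin (2 ^ r) → ZMod (2 ^ k)))
    (hcard : Nat.card D = 2 ^ r * 2 ^ k)
    (hwts : ∀ x ∈ D, x ≠ 0 →
      wtStarW k (2 ^ r) x = 2 ^ r * 2 ^ (k - 2) ∨
        wtStarW k (2 ^ r) x = 2 ^ r * 2 ^ (k - 1)) :
    ∃ c ∈ D, ∀ i, IsUnit (c i) := by
  have := Fintype.ofFinite D
  by_contra! hno
  have hwt : ∀ x ∈ D, x ≠ 0 → 2 ^ r * 2 ^ (k - 2) ≤ wtStarW k (2 ^ r) x := fun x hx hx0 =>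
    (hwts x hx hx0).elim ge_of_eq fun h =>
      h ▸ Nat.mul_le_mul_left _ (Nat.pow_le_pow_right two_pos (by omega))
  have hunit (j : Fin (2 ^ r)) : ∃ x : D, IsUnit ((x : Fin (2 ^ r) → ZMod (2 ^ k)) j) := by
    obtain ⟨x, hx, hu⟩ := exists_mem_isUnit_apply hk D hcard.ge hwt j
    exact ⟨⟨x, hx⟩, hu⟩
  have hsum :
      ∑ x : D, #{j | IsUnit ((x : Fin (2 ^ r) → ZMod (2 ^ k)) j)} * 2 = ∑ _x : D, 2 ^ r := by
    rw [sum_const, card_univ, smul_eq_mul, mul_comm]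
    exact sum_card_filter_isUnit_mul_two (by omega) D.subtype.toAddMonoidHom hunit
  have hhalf (x : D) : #{j | IsUnit ((x : Fin (2 ^ r) → ZMod (2 ^ k)) j)} * 2 ≤ 2 ^ r :=
    card_filter_isUnit_mul_two_le hk D hwts x.2 (hno x x.2)
  have hzero := (sum_eq_sum_iff_of_le fun x _ => hhalf x).1 hsum 0 (mem_univ _)
  have : Fact (1 < 2 ^ k) := ⟨Nat.one_lt_two_pow (by omega)⟩
  simp only [ZeroMemClass.coe_zero, Pi.zero_apply, isUnit_zero_iff, zero_ne_one, filter_false,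
    card_empty, zero_mul] at hzero
  exact absurd hzero.symm (by positivity)
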